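/- Assume the Szegő class condition: for every l ∈ ℕ, the partial products ∏_{p=1}^{m} d_{l,l+p} converge, as m → ∞, to a positive limit; set g_l = s_l · ∏_{j=1}^{∞} d_{l,l+j}². Then for every n ∈ ℕ, (∏_{l=0}^{n} g_l) / D_{0,n} = ∏_{k=0}^{n} ∏_{j=n+1}^{∞} d_{k,j}², where each inner infinite product converges to a positive limit. -/

import Mathlib

open Polynomial Filter Finset

/-!
Write `C_k = ∏_{j=k+1}^{n} d_{k,j}²`. Then `D_{0,n} = (∏_{k ≤ n} s_k) ∏_{k ≤ n} C_k`, and the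
tail `∏_{j=n+1}^{m} d_{k,j}²` is the partial product `∏_{j=k+1}^{m} d_{k,j}²` divided by `C_k`,
so it tends to `G_k² / C_k`. Cancelling the `s_k` gives the identity with `P_k = G_k² / C_k`.
-/

/-- The complementary quantity `d_{k,j} = (1 - |γ_{k,j}|²)^{1/2}`. -/
noncomputable def dd (γ : ℕ → ℕ → ℂ) (k j : ℕ) : ℝ :=
  Real.sqrt (1 - ‖γ k j‖ ^ 2)

/-- The pair `(φ_n(·,l), φ♯_n(·,l))` of Szegő-type orthogonal polynomials attached to the
Schur parameters `γ` and the diagonal `s`, defined by the recurrences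
`φ_n(X,l) = d_{l,n+l}⁻¹ (X φ_{n-1}(X,l+1) - γ_{l,n+l} φ♯_{n-1}(X,l))` and
`φ♯_n(X,l) = d_{l,n+l}⁻¹ (-conj(γ_{l,n+l}) X φ_{n-1}(X,l+1) + φ♯_{n-1}(X,l))`,
with `φ_0(X,l) = φ♯_0(X,l) = s_l^{-1/2}`. -/
noncomputable def phiPair (s : ℕ → ℝ) (γ : ℕ → ℕ → ℂ) : ℕ → ℕ → Polynomial ℂ × Polynomial ℂ
  | 0, l => (Polynomial.C (((Real.sqrt (s l))⁻¹ : ℝ) : ℂ),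
             Polynomial.C (((Real.sqrt (s l))⁻¹ : ℝ) : ℂ))
  | n + 1, l =>
      (Polynomial.C (((dd γ l (n + 1 + l))⁻¹ : ℝ) : ℂ) *
         (Polynomial.X * (phiPair s γ n (l + 1)).1 -
           Polynomial.C (γ l (n + 1 + l)) * (phiPair s γ n l).2),
       Polynomial.C (((dd γ l (n + 1 + l))⁻¹ : ℝ) : ℂ) *
         (-(Polynomial.C ((starRingEnd ℂ) (γ l (n + 1 + l))) * Polynomial.X *
             (phiPair s γ n (l + 1)).1) +
           (phiPair s γ n l).2))

/-- The orthogonal polynomial `φ_n(X,l)`. -/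
noncomputable def phi (s : ℕ → ℝ) (γ : ℕ → ℕ → ℂ) (n l : ℕ) : Polynomial ℂ :=
  (phiPair s γ n l).1

/-- The reversed polynomial `φ♯_n(X,l)`. -/
noncomputable def phiSharp (s : ℕ → ℝ) (γ : ℕ → ℕ → ℂ) (n l : ℕ) : Polynomial ℂ :=
  (phiPair s γ n l).2

/-- The determinant `D_{r,q} = (∏_{k=r}^q s_k) ∏_{r ≤ k < j ≤ q} d_{k,j}²` of the positive
definite kernel associated with the parameters `γ`. -/
noncomputable def Ddet (s : ℕ → ℝ) (γ : ℕ → ℕ → ℂ) (r q : ℕ) : ℝ :=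
  (∏ k ∈ Finset.Icc r q, s k) *
    ∏ k ∈ Finset.Icc r q, ∏ j ∈ Finset.Icc (k + 1) q, (dd γ k j) ^ 2

lemma dd_pos {γ : ℕ → ℕ → ℂ} {k j : ℕ} (h : ‖γ k j‖ < 1) : 0 < dd γ k j :=
  Real.sqrt_pos.mpr (by nlinarith [norm_nonneg (γ k j)])

lemma prod_Icc_succ_mul_prod_Icc_succ {M : Type*} [CommMonoid M] (f : ℕ → M) {a b c : ℕ}
    (hab : a ≤ b) (hbc : b ≤ c) :
    (∏ j ∈ Icc (a + 1) b, f j) * ∏ j ∈ Icc (b + 1) c, f j = ∏ j ∈ Icc (a + 1) c, f j := by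
  simp only [Icc_add_one_left_eq_Ioc]
  exact prod_Ioc_consecutive f hab hbc

lemma prod_Icc_one_add {M : Type*} [CommMonoid M] (f : ℕ → M) (k m : ℕ) :
    ∏ p ∈ Icc 1 m, f (k + p) = ∏ j ∈ Icc (k + 1) (k + m), f j := by
  rw [← map_add_left_Icc, prod_map]
  rfl

lemma tendsto_prod_Icc_tail {K : Type*} [Field K] [TopologicalSpace K] [ContinuousMul K]
    {f : ℕ → K} {k n : ℕ} {a : K} (hkn : k ≤ n) (hC : ∏ j ∈ Icc (k + 1) n, f j ≠ 0)
    (h : Tendsto (fun m => ∏ p ∈ Icc 1 m, f (k + p)) atTop (nhds a)) :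
    Tendsto (fun m => ∏ j ∈ Icc (n + 1) m, f j) atTop
      (nhds (a / ∏ j ∈ Icc (k + 1) n, f j)) := by
  refine ((h.comp (tendsto_sub_atTop_nat k)).div_const _).congr' ?_
  filter_upwards [eventually_ge_atTop n] with m hm
  rw [Function.comp_apply, prod_Icc_one_add, Nat.add_sub_cancel' (hkn.trans hm),
    ← prod_Icc_succ_mul_prod_Icc_succ f hkn hm, mul_div_cancel_left₀ _ hC]

/-- Under the Szegő class condition, with `G l` the (positive) limit of the partial products
`∏_{p=1}^m d_{l,l+p}` and `g_l = s_l (G l)² = s_l ∏_{j=1}^∞ d_{l,l+j}²`, for every `n ∈ ℕ`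
one has `(∏_{l=0}^n g_l) / D_{0,n} = ∏_{k=0}^n ∏_{j=n+1}^∞ d_{k,j}²`, where each inner
infinite product converges to a positive limit. -/
theorem prod_g_div_det (s : ℕ → ℝ) (γ : ℕ → ℕ → ℂ)
    (hs : ∀ l, 0 < s l) (hγ : ∀ k j, k < j → ‖γ k j‖ < 1) (G : ℕ → ℝ)
    (hGpos : ∀ l, 0 < G l)
    (hG : ∀ l, Filter.Tendsto (fun m => ∏ p ∈ Finset.Icc 1 m, dd γ l (l + p))
      Filter.atTop (nhds (G l))) (n : ℕ) :
    ∃ P : ℕ → ℝ,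
      (∀ k ≤ n, 0 < P k ∧
        Filter.Tendsto (fun m => ∏ j ∈ Finset.Icc (n + 1) m, (dd γ k j) ^ 2)
          Filter.atTop (nhds (P k))) ∧
      (∏ l ∈ Finset.range (n + 1), s l * (G l) ^ 2) / Ddet s γ 0 n =
        ∏ k ∈ Finset.range (n + 1), P k := by
  have hC : ∀ k, 0 < ∏ j ∈ Icc (k + 1) n, dd γ k j ^ 2 := fun k =>
    prod_pos fun j hj => pow_pos (dd_pos (hγ k j (by simp only [mem_Icc] at hj; omega))) 2
  refine ⟨fun k => G k ^ 2 / ∏ j ∈ Icc (k + 1) n, dd γ k j ^ 2,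
    fun k hk => ⟨div_pos (pow_pos (hGpos k) 2) (hC k), ?_⟩, ?_⟩
  · exact tendsto_prod_Icc_tail hk (hC k).ne' (by simpa only [prod_pow] using (hG k).pow 2)
  · rw [Ddet, ← Nat.range_succ_eq_Icc_zero, prod_mul_distrib, prod_div_distrib,
      mul_div_mul_left _ _ (prod_pos fun l _ => hs l).ne']
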